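/- Let p > 1 and α₁, α₂ > 0. The measure on ((√p−1)², (√p+1)²) with density √(((√p+1)² − x)(x − (√p−1)²))/(2πx) · (α₁ + α₂/x²) is a probability measure if and only if α₁ + α₂·p/(p−1)³ = 1. -/

import Mathlib

open MeasureTheory Set

/-- The measure on `((√p-1)², (√p+1)²)` with density
`√(((√p+1)² - x)(x - (√p-1)²))/(2πx) · (α₁ + α₂/x²)`. -/
noncomputable def fpMixture (p α₁ α₂ : ℝ) : Measure ℝ :=
  MeasureTheory.volume.withDensity
    (fun x => ENNReal.ofReal
      ((Set.Ioo ((Real.sqrt p - 1) ^ 2) ((Real.sqrt p + 1) ^ 2)).indicator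
        (fun x =>
          Real.sqrt (((Real.sqrt p + 1) ^ 2 - x) * (x - (Real.sqrt p - 1) ^ 2)) /
              (2 * Real.pi * x) * (α₁ + α₂ / x ^ 2)) x))

open Real

/-! With `a = (√p-1)²`, `b = (√p+1)²` the total mass is `(α₁ I₁ + α₂ I₃) / (2π)`, where
`Iₙ = ∫ₐᵇ √((b-x)(x-a)) / xⁿ dx`. Both integrals are elementary: `√((b-x)(x-a))`,
`arcsin ((2x-(a+b))/(b-a))` and `arcsin (((a+b)x-2ab)/((b-a)x))` have derivatives
`(a+b-2x)/(2√…)`, `1/√…` and `√(ab)/(x√…)`, and combining them gives primitives showing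
`I₁ = π((a+b)/2 - √(ab))` and `I₃ = π(b-a)²/(8ab√(ab))`. Since `a+b = 2(p+1)`, `ab = (p-1)²` and
`(b-a)² = 16p`, the mass is `α₁ + α₂ p/(p-1)³`. -/

section Primitives

variable {a b x : ℝ}

lemma HasDerivAt.arcsin_of_one_sub_sq_eq {g : ℝ → ℝ} {g' c q : ℝ} (hg : HasDerivAt g g' x)
    (hc : 0 < c) (hq : 0 < q) (h : 1 - g x ^ 2 = c ^ 2 * q) :
    HasDerivAt (fun y => arcsin (g y)) (g' / (c * √q)) x := by
  have hlt : g x ^ 2 < 1 := by nlinarith [mul_pos (pow_pos hc 2) hq]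
  have hne : g x ≠ -1 ∧ g x ≠ 1 := by
    constructor <;> rintro heq <;> rw [heq] at hlt <;> norm_num at hlt
  have hsqrt : √(1 - g x ^ 2) = c * √q := by
    rw [h, sqrt_mul (by positivity), sqrt_sq hc.le]
  have := (hasDerivAt_arcsin hne.1 hne.2).comp x hg
  rwa [hsqrt, one_div_mul_eq_div] at this

lemma hasDerivAt_sqrt_sub_mul_sub (hax : a < x) (hxb : x < b) :
    HasDerivAt (fun y => √((b - y) * (y - a)))
      ((a + b - 2 * x) / (2 * √((b - x) * (x - a)))) x := by
  have hinner : HasDerivAt (fun y => (b - y) * (y - a)) (a + b - 2 * x) x :=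
    (((hasDerivAt_id' x).const_sub b).fun_mul ((hasDerivAt_id' x).sub_const a)).congr_deriv
      (by ring)
  exact hinner.sqrt (mul_pos (by linarith) (by linarith)).ne'

lemma hasDerivAt_arcsin_affine (hax : a < x) (hxb : x < b) :
    HasDerivAt (fun y => arcsin ((2 * y - (a + b)) / (b - a))) (1 / √((b - x) * (x - a))) x := by
  have hba : 0 < b - a := by linarith
  have hinner := (((hasDerivAt_id' x).const_mul 2).sub_const (a + b)).div_const (b - a)
  convert hinner.arcsin_of_one_sub_sq_eq (c := 2 / (b - a)) (q := (b - x) * (x - a))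
    (by positivity) (mul_pos (by linarith) (by linarith)) (by field_simp; ring) using 1
  field_simp

/-- The argument is minus the affine one of `hasDerivAt_arcsin_affine` evaluated at `ab/x`. -/
lemma hasDerivAt_arcsin_moebius (ha : 0 < a) (hax : a < x) (hxb : x < b) :
    HasDerivAt (fun y => arcsin (((a + b) * y - 2 * (a * b)) / ((b - a) * y)))
      (√(a * b) / (x * √((b - x) * (x - a)))) x := by
  have hx : 0 < x := ha.trans hax
  have hba : 0 < b - a := by linarith
  have hab : 0 < a * b := mul_pos ha (hx.trans hxb)
  have hq : 0 < (b - x) * (x - a) := mul_pos (by linarith) (by linarith)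
  have hinner := (((hasDerivAt_id' x).const_mul (a + b)).sub_const (2 * (a * b))).fun_div
    ((hasDerivAt_id' x).const_mul (b - a)) (by positivity)
  convert hinner.arcsin_of_one_sub_sq_eq (c := 2 / ((b - a) * x))
    (q := a * b * ((b - x) * (x - a))) (by positivity) (mul_pos hab hq)
    (by field_simp; ring) using 1
  rw [sqrt_mul hab.le]
  field_simp
  linear_combination 2 * sq_sqrt hab.le

lemma intervalIntegrable_sqrt_sub_mul_sub_div_pow (ha : 0 < a) (hab : a ≤ b) (n : ℕ) :
    IntervalIntegrable (fun x => √((b - x) * (x - a)) / x ^ n) volume a b := by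
  have hx : ∀ x ∈ Icc a b, x ^ n ≠ 0 := fun x hx => pow_ne_zero n (ha.trans_le hx.1).ne'
  exact ContinuousOn.intervalIntegrable_of_Icc hab (by fun_prop (disch := assumption))

lemma integral_sqrt_sub_mul_sub_div (ha : 0 < a) (hab : a < b) :
    ∫ x in a..b, √((b - x) * (x - a)) / x = π * ((a + b) / 2 - √(a * b)) := by
  have hab' : 0 < a * b := mul_pos ha (ha.trans hab)
  have hx : ∀ x ∈ Icc a b, (b - a) * x ≠ 0 := fun x hx =>
    mul_ne_zero (sub_ne_zero.2 hab.ne') (ha.trans_le hx.1).ne'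
  let F : ℝ → ℝ := fun y => √((b - y) * (y - a))
    + (a + b) / 2 * arcsin ((2 * y - (a + b)) / (b - a))
    - √(a * b) * arcsin (((a + b) * y - 2 * (a * b)) / ((b - a) * y))
  have hF : ∀ x ∈ Ioo a b, HasDerivAt F (√((b - x) * (x - a)) / x) x := by
    rintro x ⟨hax, hxb⟩
    have hq : 0 < (b - x) * (x - a) := mul_pos (by linarith) (by linarith)
    have hx0 : 0 < x := ha.trans hax
    refine (((hasDerivAt_sqrt_sub_mul_sub hax hxb).add
      ((hasDerivAt_arcsin_affine hax hxb).const_mul _)).sub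
      ((hasDerivAt_arcsin_moebius ha hax hxb).const_mul _)).congr_deriv ?_
    field_simp
    linear_combination -2 * sq_sqrt hq.le - 2 * sq_sqrt hab'.le
  rw [intervalIntegral.integral_eq_sub_of_hasDerivAt_of_le hab.le
    (by fun_prop (disch := assumption)) hF
    (by simpa using intervalIntegrable_sqrt_sub_mul_sub_div_pow ha hab.le 1)]
  have hb1 : ((a + b) * b - 2 * (a * b)) / ((b - a) * b) = 1 := by
    field_simp [sub_ne_zero.2 hab.ne', (ha.trans hab).ne']; ring
  have ha1 : ((a + b) * a - 2 * (a * b)) / ((b - a) * a) = -1 := by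
    field_simp [sub_ne_zero.2 hab.ne', ha.ne']; ring
  have hb2 : (2 * b - (a + b)) / (b - a) = 1 := by
    field_simp [sub_ne_zero.2 hab.ne']; ring
  have ha2 : (2 * a - (a + b)) / (b - a) = -1 := by
    field_simp [sub_ne_zero.2 hab.ne']; ring
  simp only [F, ha1, hb1, ha2, hb2, sub_self, zero_mul, mul_zero, sqrt_zero, arcsin_one,
    arcsin_neg_one]
  ring

lemma integral_sqrt_sub_mul_sub_div_pow_three (ha : 0 < a) (hab : a < b) :
    ∫ x in a..b, √((b - x) * (x - a)) / x ^ 3 = π * (b - a) ^ 2 / (8 * (a * b) * √(a * b)) := by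
  have hab' : 0 < a * b := mul_pos ha (ha.trans hab)
  have hx : ∀ x ∈ Icc a b, 4 * (a * b) * x ^ 2 ≠ 0 := fun x hx => by
    have := ha.trans_le hx.1; positivity
  have hx' : ∀ x ∈ Icc a b, (b - a) * x ≠ 0 := fun x hx =>
    mul_ne_zero (sub_ne_zero.2 hab.ne') (ha.trans_le hx.1).ne'
  let F : ℝ → ℝ := fun y =>
    ((a + b) * y - 2 * (a * b)) / (4 * (a * b) * y ^ 2) * √((b - y) * (y - a))
    + (b - a) ^ 2 / (8 * (a * b) * √(a * b)) * arcsin (((a + b) * y - 2 * (a * b)) / ((b - a) * y))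
  have hF : ∀ x ∈ Ioo a b, HasDerivAt F (√((b - x) * (x - a)) / x ^ 3) x := by
    rintro x ⟨hax, hxb⟩
    have hq : 0 < (b - x) * (x - a) := mul_pos (by linarith) (by linarith)
    have hx0 : 0 < x := ha.trans hax
    have hcoef := (((hasDerivAt_id' x).const_mul (a + b)).sub_const (2 * (a * b))).fun_div
      ((hasDerivAt_pow 2 x).const_mul (4 * (a * b))) (by positivity)
    refine ((hcoef.fun_mul (hasDerivAt_sqrt_sub_mul_sub hax hxb)).add
      ((hasDerivAt_arcsin_moebius ha hax hxb).const_mul _)).congr_deriv ?_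
    have hb0 : b ≠ 0 := (hx0.trans hxb).ne'
    field_simp
    linear_combination -16 * (a + b) * x ^ 2 * sq_sqrt hq.le
  rw [intervalIntegral.integral_eq_sub_of_hasDerivAt_of_le hab.le
    (by fun_prop (disch := assumption)) hF
    (intervalIntegrable_sqrt_sub_mul_sub_div_pow ha hab.le 3)]
  have hb1 : ((a + b) * b - 2 * (a * b)) / ((b - a) * b) = 1 := by
    field_simp [sub_ne_zero.2 hab.ne', (ha.trans hab).ne']; ring
  have ha1 : ((a + b) * a - 2 * (a * b)) / ((b - a) * a) = -1 := by
    field_simp [sub_ne_zero.2 hab.ne', ha.ne']; ring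
  simp only [F, ha1, hb1, sub_self, zero_mul, mul_zero, sqrt_zero, arcsin_one, arcsin_neg_one]
  ring

lemma integral_sqrt_sub_mul_sub_div_mul_add (ha : 0 < a) (hab : a < b) (α₁ α₂ : ℝ) :
    ∫ x in a..b, √((b - x) * (x - a)) / (2 * π * x) * (α₁ + α₂ / x ^ 2)
      = α₁ * (((a + b) / 2 - √(a * b)) / 2)
        + α₂ * ((b - a) ^ 2 / (16 * (a * b) * √(a * b))) := by
  have h1 := intervalIntegrable_sqrt_sub_mul_sub_div_pow ha hab.le 1
  have h3 := intervalIntegrable_sqrt_sub_mul_sub_div_pow ha hab.le 3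
  calc _ = ∫ x in a..b, (α₁ / (2 * π) * (√((b - x) * (x - a)) / x ^ 1)
          + α₂ / (2 * π) * (√((b - x) * (x - a)) / x ^ 3)) := by
        refine intervalIntegral.integral_congr fun x hx => ?_
        have hx0 : 0 < x := ha.trans_le (uIcc_of_le hab.le ▸ hx).1
        field_simp
    _ = _ := by
      rw [intervalIntegral.integral_add (h1.const_mul _) (h3.const_mul _),
        intervalIntegral.integral_const_mul, intervalIntegral.integral_const_mul]
      simp only [pow_one]
      rw [integral_sqrt_sub_mul_sub_div ha hab, integral_sqrt_sub_mul_sub_div_pow_three ha hab]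
      field_simp
      ring

end Primitives

lemma withDensity_ofReal_indicator_Ioo_univ {f : ℝ → ℝ} {a b : ℝ} (hab : a ≤ b)
    (hf : IntervalIntegrable f volume a b) (hf₀ : ∀ x ∈ Ioo a b, 0 ≤ f x) :
    volume.withDensity (fun x => ENNReal.ofReal ((Ioo a b).indicator f x)) univ
      = ENNReal.ofReal (∫ x in a..b, f x) := by
  have hint : Integrable ((Ioo a b).indicator f) :=
    (integrable_indicator_iff measurableSet_Ioo).2 (hf.1.mono_set Ioo_subset_Ioc_self)
  rw [withDensity_apply _ MeasurableSet.univ, Measure.restrict_univ,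
    ← ofReal_integral_eq_lintegral_ofReal hint (.of_forall (indicator_nonneg hf₀)),
    integral_indicator measurableSet_Ioo, ← integral_Ioc_eq_integral_Ioo,
    ← intervalIntegral.integral_of_le hab]

lemma fpMixture_apply_univ {p α₁ α₂ : ℝ} (hp : 1 < p) (hα₁ : 0 ≤ α₁) (hα₂ : 0 ≤ α₂) :
    fpMixture p α₁ α₂ univ = ENNReal.ofReal (α₁ + α₂ * (p / (p - 1) ^ 3)) := by
  have hs : 1 < √p := by rwa [lt_sqrt zero_le_one, one_pow]
  have hsq : √p ^ 2 = p := sq_sqrt (by linarith)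
  have ha : 0 < (√p - 1) ^ 2 := pow_pos (sub_pos.2 hs) 2
  have hab : (√p - 1) ^ 2 < (√p + 1) ^ 2 := by nlinarith
  have hsum : (√p - 1) ^ 2 + (√p + 1) ^ 2 = 2 * (p + 1) := by linear_combination 2 * hsq
  have hdiff : ((√p + 1) ^ 2 - (√p - 1) ^ 2) ^ 2 = 16 * p := by linear_combination 16 * hsq
  have hprod : (√p - 1) ^ 2 * (√p + 1) ^ 2 = (p - 1) ^ 2 := by
    linear_combination (√p ^ 2 + p - 2) * hsq
  have hx₁ : ∀ x ∈ Icc ((√p - 1) ^ 2) ((√p + 1) ^ 2), 2 * π * x ≠ 0 := fun x hx => by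
    have := ha.trans_le hx.1; positivity
  have hx₂ : ∀ x ∈ Icc ((√p - 1) ^ 2) ((√p + 1) ^ 2), x ^ 2 ≠ 0 := fun x hx => by
    have := ha.trans_le hx.1; positivity
  rw [fpMixture, withDensity_ofReal_indicator_Ioo_univ hab.le
    (ContinuousOn.intervalIntegrable_of_Icc hab.le (by fun_prop (disch := assumption)))
    (fun x hx => by have := ha.trans hx.1; positivity),
    integral_sqrt_sub_mul_sub_div_mul_add ha hab, hsum, hdiff, hprod, sqrt_sq (by linarith)]
  have hp1 : p - 1 ≠ 0 := by linarith
  congr 1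
  field_simp
  ring

theorem fpMixture_isProbability_iff (p α₁ α₂ : ℝ) (hp : 1 < p)
    (hα₁ : 0 < α₁) (hα₂ : 0 < α₂) :
    IsProbabilityMeasure (fpMixture p α₁ α₂) ↔ α₁ + α₂ * (p / (p - 1) ^ 3) = 1 := by
  rw [isProbabilityMeasure_iff, fpMixture_apply_univ hp hα₁.le hα₂.le, ENNReal.ofReal_eq_one]
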